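/- Let T be a finite tree with at least two vertices, let v be a vertex of T of degree 1, and let K be a field. Then the induced subgraph T_{V∖{v}} (the tree obtained by removing v) is a neighborhood-minor of T, and the cut algebra K[T_{V∖{v}}] is an algebra retract of the cut algebra K[T]. -/

import Mathlib

open scoped Classical

noncomputable section

namespace CutPaper

open MvPolynomial

/-- An edge `e` is cut by the partition `A | Aᶜ` if it has exactly one endpoint in `A`. -/
def IsCutEdge {V : Type} (A : Set V) (e : Sym2 V) : Prop :=
  ∃ u v : V, e = s(u, v) ∧ u ∈ A ∧ v ∉ A

/-- The cut set of `A`: all edges of `G` with exactly one endpoint in `A`. -/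
def cutSet {V : Type} (G : SimpleGraph V) (A : Set V) : Set (Sym2 V) :=
  {e ∈ G.edgeSet | IsCutEdge A e}

lemma isCutEdge_compl {V : Type} (A : Set V) (e : Sym2 V) :
    IsCutEdge Aᶜ e ↔ IsCutEdge A e := by
  constructor <;> rintro ⟨u, v, rfl, hu, hv⟩
  · exact ⟨v, u, Sym2.eq_swap, Set.notMem_compl_iff.mp hv, hu⟩
  · exact ⟨v, u, Sym2.eq_swap, hv, not_not_intro hu⟩

/-- Two subsets determine the same unordered partition `A | Aᶜ` of `V`
iff they are equal or complementary. -/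
def partitionSetoid (V : Type) : Setoid (Set V) where
  r A B := B = A ∨ B = Aᶜ
  iseqv := by
    refine ⟨fun A => Or.inl rfl, @fun A B h => ?_, @fun A B C h1 h2 => ?_⟩
    · rcases h with rfl | rfl
      · exact Or.inl rfl
      · exact Or.inr (compl_compl A).symm
    · rcases h1 with rfl | rfl <;> rcases h2 with rfl | rfl
      · exact Or.inl rfl
      · exact Or.inr rfl
      · exact Or.inr rfl
      · exact Or.inl (compl_compl A)

/-- The unordered partitions `A | Aᶜ` of `V`, indexing the variables of `S_G`. -/
abbrev Partition (V : Type) := Quotient (partitionSetoid V)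

variable (K : Type) [CommRing K]

/-- The variable `q_{A|Aᶜ}` of the polynomial ring `S_G`. -/
def qPart {V : Type} (A : Set V) : MvPolynomial (Partition V) K :=
  X (Quotient.mk (partitionSetoid V) A)

/-- The monomial `u_A = ∏_{e ∈ Cut(A)} s_e · ∏_{e ∈ E \ Cut(A)} t_e`;
the variable `s_e` is `X (true, e)` and `t_e` is `X (false, e)`. -/
def cutMonomial {V : Type} [Finite V] (G : SimpleGraph V) (A : Set V) :
    MvPolynomial (Bool × Sym2 V) K :=
  ∏ e ∈ (Set.toFinite G.edgeSet).toFinset,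
    if IsCutEdge A e then X (true, e) else X (false, e)

lemma cutMonomial_compl {V : Type} [Finite V] (G : SimpleGraph V) (A : Set V) :
    cutMonomial K G Aᶜ = cutMonomial K G A := by
  unfold cutMonomial
  refine Finset.prod_congr rfl fun e _ => ?_
  by_cases h : IsCutEdge A e
  · rw [if_pos ((isCutEdge_compl A e).mpr h), if_pos h]
  · rw [if_neg fun hc => h ((isCutEdge_compl A e).mp hc), if_neg h]

/-- The `K`-algebra homomorphism `φ_G : S_G → R_G`, `q_{A|Aᶜ} ↦ u_A`. -/
def phi {V : Type} [Finite V] (G : SimpleGraph V) :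
    MvPolynomial (Partition V) K →ₐ[K] MvPolynomial (Bool × Sym2 V) K :=
  aeval fun p : Partition V =>
    Quotient.lift (cutMonomial K G)
      (fun A B hAB => by
        have h : B = A ∨ B = Aᶜ := hAB
        rcases h with rfl | rfl
        · rfl
        · exact (cutMonomial_compl K G A).symm) p

/-- The cut ideal `I_G = ker φ_G`. -/
def cutIdeal {V : Type} [Finite V] (G : SimpleGraph V) :
    Ideal (MvPolynomial (Partition V) K) :=
  RingHom.ker (phi K G)

/-- The cut algebra `K[G]`, i.e. the image of `φ_G`: the `K`-subalgebra of `R_G`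
generated by the monomials `u_A`. -/
def cutAlgebra {V : Type} [Finite V] (G : SimpleGraph V) :
    Subalgebra K (MvPolynomial (Bool × Sym2 V) K) :=
  Algebra.adjoin K {m | ∃ A : Set V, m = cutMonomial K G A}

/-- The generator `u_A` of the cut algebra, as an element of the cut algebra. -/
def uGen {V : Type} [Finite V] (G : SimpleGraph V) (A : Set V) : ↥(cutAlgebra K G) :=
  ⟨cutMonomial K G A, Algebra.subset_adjoin ⟨A, rfl⟩⟩

/-- An element of `S_G/I` is homogeneous of degree `d` if it is the class of a homogeneous
polynomial of degree `d`. -/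
def QuotHomogeneous {σ : Type} (I : Ideal (MvPolynomial σ K)) (d : ℕ)
    (x : MvPolynomial σ K ⧸ I) : Prop :=
  ∃ f : MvPolynomial σ K, f.IsHomogeneous d ∧ Ideal.Quotient.mk I f = x

/-- The cut algebra of `H` is an algebra retract of the cut algebra of `G`:
there are homogeneous `K`-algebra homomorphisms `ι : K[H] → K[G]` (injective) and
`π : K[G] → K[H]` with `π ∘ ι = id`. -/
def CutAlgebraRetract {V W : Type} [Finite V] [Finite W]
    (H : SimpleGraph W) (G : SimpleGraph V) : Prop :=
  ∃ (ι : (MvPolynomial (Partition W) K ⧸ cutIdeal K H) →ₐ[K]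
      (MvPolynomial (Partition V) K ⧸ cutIdeal K G))
    (π : (MvPolynomial (Partition V) K ⧸ cutIdeal K G) →ₐ[K]
      (MvPolynomial (Partition W) K ⧸ cutIdeal K H)),
    Function.Injective ι ∧
    (∀ d x, QuotHomogeneous K (cutIdeal K H) d x →
      ∃ d', QuotHomogeneous K (cutIdeal K G) d' (ι x)) ∧
    (∀ d x, QuotHomogeneous K (cutIdeal K G) d x →
      ∃ d', QuotHomogeneous K (cutIdeal K H) d' (π x)) ∧
    π.comp ι = AlgHom.id K _

/-- The graph obtained from `G` by contracting the edge `{u, v}`: the vertex `u` is removed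
and merged into `v`. -/
def contractEdge {V : Type} (G : SimpleGraph V) (u v : V) :
    SimpleGraph {x : V // x ≠ u} where
  Adj a b := a ≠ b ∧
    (G.Adj a b ∨ ((a : V) = v ∧ G.Adj u b) ∨ ((b : V) = v ∧ G.Adj a u))
  symm := ⟨by
    rintro a b ⟨hne, h | ⟨ha, h⟩ | ⟨hb, h⟩⟩
    · exact ⟨hne.symm, Or.inl h.symm⟩
    · exact ⟨hne.symm, Or.inr (Or.inr ⟨ha, h.symm⟩)⟩
    · exact ⟨hne.symm, Or.inr (Or.inl ⟨hb, h.symm⟩)⟩⟩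
  loopless := ⟨fun a h => h.1 rfl⟩

/-- The induced subgraph `G_W` is a neighborhood-minor of `G`: `W` and `W' = Wᶜ` are nonempty
and there is a vertex `v ∈ W` with `W ∩ N_G(W') ⊆ N_{G_W}[v]`. -/
def IsNeighborhoodMinor {V : Type} (G : SimpleGraph V) (W : Set V) : Prop :=
  W.Nonempty ∧ Wᶜ.Nonempty ∧
    ∃ v ∈ W, ∀ x ∈ W, (∃ y ∈ Wᶜ, G.Adj y x) → x = v ∨ G.Adj v x

/-- The cut vector `δ_A ∈ {0,1}^E` of the partition `A | Aᶜ`. -/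
def cutVector {V : Type} (G : SimpleGraph V) (A : Set V) : ↥G.edgeSet → ℝ :=
  fun e => if IsCutEdge A (e : Sym2 V) then 1 else 0

/-- The cut polytope `Cut^□(G) ⊆ ℝ^E`: the convex hull of the cut vectors. -/
def cutPolytope {V : Type} (G : SimpleGraph V) : Set (↥G.edgeSet → ℝ) :=
  convexHull ℝ {x | ∃ A : Set V, x = cutVector G A}

/-- `F` is a face of `P`: either a trivial face (`P` or `∅`), or the intersection of `P`
with a supporting hyperplane. -/
def IsFace {α : Type} (P F : Set (α → ℝ)) : Prop :=
  F = P ∨ F = ∅ ∨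
    ∃ (φ : (α → ℝ) →ₗ[ℝ] ℝ) (c : ℝ), φ ≠ 0 ∧
      (∀ x ∈ P, φ x ≤ c) ∧ F = P ∩ {x | φ x = c}

/-- `P` and `Q` are affinely isomorphic: there is a bijective map from `P` onto `Q`
extending to an affine map. -/
def AffinelyIsomorphic {α β : Type} (P : Set (α → ℝ)) (Q : Set (β → ℝ)) : Prop :=
  ∃ f : (α → ℝ) →ᵃ[ℝ] (β → ℝ), Set.InjOn f P ∧ f '' P = Q

/-- The monomial `z · ∏_{e ∈ Cut(A)} y_e` of the polytopal algebra of the cut polytope;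
the variable `z` is `X none` and `y_e` is `X (some e)`. -/
def polytopeMonomial {V : Type} [Finite V] (G : SimpleGraph V) (A : Set V) :
    MvPolynomial (Option (Sym2 V)) K :=
  X none * ∏ e ∈ (Set.toFinite (cutSet G A)).toFinset, X (some e)

/-- The polytopal algebra `K[Cut^□(G)]`: the subalgebra of `K[y_e (e ∈ E), z]` generated by
the monomials `z · y^{δ_A}` attached to the lattice points (= cut vectors) of `Cut^□(G)`. -/
def polytopalAlgebra {V : Type} [Finite V] (G : SimpleGraph V) :
    Subalgebra K (MvPolynomial (Option (Sym2 V)) K) :=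
  Algebra.adjoin K {m | ∃ A : Set V, m = polytopeMonomial K G A}

/-- `G'` is a combinatorial retract of `G`: it is obtained from `G` by a finite sequence of
edge contractions and neighborhood-minors. -/
inductive CombinatorialRetract : ∀ {V W : Type}, SimpleGraph V → SimpleGraph W → Prop
  | refl {V : Type} (G : SimpleGraph V) : CombinatorialRetract G G
  | contract {V W : Type} (G : SimpleGraph V) (u v : V) (huv : G.Adj u v)
      (G' : SimpleGraph W) (h : CombinatorialRetract (contractEdge G u v) G') :
      CombinatorialRetract G G'
  | nbhdMinor {V W : Type} (G : SimpleGraph V) (S : Set V)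
      (hS : IsNeighborhoodMinor G S) (G' : SimpleGraph W)
      (h : CombinatorialRetract (SimpleGraph.induce S G) G') :
      CombinatorialRetract G G'

/-!
Let `v` be a leaf of `G` with neighbour `w` and `H = G_{V ∖ {v}}`. Restricting partitions of `V`
to `V ∖ {v}`, and extending partitions of `V ∖ {v}` by putting `v` on the side of `w`, are maps
of partitions, the first a left inverse of the second, and the induced renamings `S_G → S_H`,
`S_H → S_G` respect the cut ideals. Indeed `u_A = (s_{vw} or t_{vw}) · u_{A ∖ v}`, so restriction
intertwines `φ_G` and `φ_H` once the variables of the leaf edge are set to `1`, and extension does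
so once one fixed edge variable of `H` is multiplied by `t_{vw}` (every cut monomial of `H`
contains exactly one variable per edge). If `H` has no edges, `K[H] = K` and `ι` is the
structure map.
-/

lemma isCutEdge_map {V W : Type} (f : W → V) (A : Set V) (e : Sym2 W) :
    IsCutEdge A (e.map f) ↔ IsCutEdge (f ⁻¹' A) e := by
  induction e using Sym2.ind with
  | _ x y =>
    constructor
    · rintro ⟨a, b, h, ha, hb⟩
      rcases Sym2.eq_iff.mp h with ⟨rfl, rfl⟩ | ⟨rfl, rfl⟩
      exacts [⟨x, y, rfl, ha, hb⟩, ⟨y, x, Sym2.eq_swap, ha, hb⟩]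
    · rintro ⟨a, b, h, ha, hb⟩
      exact ⟨f a, f b, by rw [h, Sym2.map_mk], ha, hb⟩

lemma not_isCutEdge_mk_self {V : Type} (A : Set V) (x : V) : ¬ IsCutEdge A s(x, x) := by
  rintro ⟨a, b, h, ha, hb⟩
  rcases Sym2.eq_iff.mp h with ⟨rfl, rfl⟩ | ⟨rfl, rfl⟩ <;> exact hb ha

def Partition.comap {V W : Type} (f : W → V) : Partition V → Partition W :=
  Quotient.map (f ⁻¹' ·) (by rintro A _ (rfl | rfl); exacts [Or.inl rfl, Or.inr rfl])

@[simp]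
lemma Partition.comap_mk {V W : Type} (f : W → V) (A : Set V) :
    Partition.comap f ⟦A⟧ = ⟦f ⁻¹' A⟧ :=
  rfl

lemma Partition.comap_comap {U V W : Type} (f : W → V) (g : V → U) (p : Partition U) :
    Partition.comap f (Partition.comap g p) = Partition.comap (g ∘ f) p := by
  induction p using Quotient.ind
  rfl

lemma Partition.comap_id {V : Type} (p : Partition V) : Partition.comap id p = p := by
  induction p using Quotient.ind
  rfl

lemma phi_X_mk {V : Type} [Finite V] (G : SimpleGraph V) (A : Set V) :
    phi K G (X ⟦A⟧) = cutMonomial K G A := by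
  rw [phi, aeval_X]
  rfl

lemma phi_X_of_edgeSet_eq_empty {W : Type} [Finite W] {H : SimpleGraph W} (hH : H.edgeSet = ∅)
    (p : Partition W) : phi K H (X p) = 1 := by
  induction p using Quotient.ind with
  | _ B =>
    rw [phi_X_mk, cutMonomial]
    exact Finset.prod_eq_one fun e he =>
      absurd ((Set.Finite.mem_toFinset _).mp he) (hH ▸ Set.notMem_empty e)

lemma cutIdeal_le_comap_of_comp_eq {V W : Type} [Finite V] [Finite W]
    {G : SimpleGraph V} {H : SimpleGraph W}
    (α : MvPolynomial (Partition W) K →ₐ[K] MvPolynomial (Partition V) K)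
    (ρ : MvPolynomial (Bool × Sym2 W) K →ₐ[K] MvPolynomial (Bool × Sym2 V) K)
    (h : (phi K G).comp α = ρ.comp (phi K H)) :
    cutIdeal K H ≤ (cutIdeal K G).comap α := fun f hf => by
  have hf : phi K H f = 0 := hf
  change phi K G (α f) = 0
  rw [← AlgHom.comp_apply, h, AlgHom.comp_apply, hf, map_zero]

lemma cutIdeal_le_comap_aeval_one {V W : Type} [Finite V] [Finite W] (G : SimpleGraph V)
    {H : SimpleGraph W} (hH : H.edgeSet = ∅) :
    cutIdeal K H ≤ (cutIdeal K G).comap (aeval fun _ => (1 : MvPolynomial (Partition V) K)) :=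
  cutIdeal_le_comap_of_comp_eq K _ (aeval fun _ => 1) <| algHom_ext fun p => by
    rw [AlgHom.comp_apply, AlgHom.comp_apply, phi_X_of_edgeSet_eq_empty K hH, aeval_X, map_one,
      map_one]

lemma cutAlgebraRetract_of_algHom {V W : Type} [Finite V] [Finite W]
    {G : SimpleGraph V} {H : SimpleGraph W}
    (α : MvPolynomial (Partition W) K →ₐ[K] MvPolynomial (Partition V) K)
    (β : MvPolynomial (Partition V) K →ₐ[K] MvPolynomial (Partition W) K) {m n : ℕ}
    (hα : ∀ p, (α (X p)).IsHomogeneous m) (hβ : ∀ p, (β (X p)).IsHomogeneous n)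
    (hαI : cutIdeal K H ≤ (cutIdeal K G).comap α) (hβI : cutIdeal K G ≤ (cutIdeal K H).comap β)
    (hβα : ∀ p, β (α (X p)) - X p ∈ cutIdeal K H) :
    CutAlgebraRetract K H G := by
  set ι := Ideal.quotientMapₐ (cutIdeal K G) α hαI
  set π := Ideal.quotientMapₐ (cutIdeal K H) β hβI
  have hπι : π.comp ι = AlgHom.id K _ := by
    refine Ideal.Quotient.algHom_ext _ (MvPolynomial.algHom_ext fun p => ?_)
    exact Ideal.Quotient.eq.mpr (hβα p)
  have hπι' : Function.LeftInverse π ι := fun x => DFunLike.congr_fun hπι x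
  refine ⟨ι, π, hπι'.injective, ?_, ?_, hπι⟩
  · rintro d _ ⟨f, hf, rfl⟩
    exact ⟨m * d, α f, DFunLike.congr_fun (aeval_unique α) f ▸ hf.aeval _ hα, rfl⟩
  · rintro d _ ⟨f, hf, rfl⟩
    exact ⟨n * d, β f, DFunLike.congr_fun (aeval_unique β) f ▸ hf.aeval _ hβ, rfl⟩

section Leaf

variable {V : Type} {G : SimpleGraph V} {v w : V}

def leafRetraction (hw : w ≠ v) (x : V) : ({v}ᶜ : Set V) :=
  if h : x = v then ⟨w, hw⟩ else ⟨x, h⟩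

lemma leafRetraction_comp_val (hw : w ≠ v) :
    leafRetraction hw ∘ Subtype.val = id := by
  funext x
  exact dif_neg x.2

lemma notMem_map_val_compl_singleton (e : Sym2 ({v}ᶜ : Set V)) : v ∉ e.map Subtype.val := by
  rw [Sym2.mem_map]
  rintro ⟨a, -, ha⟩
  exact a.2 ha

lemma edgeFinset_eq_insert_image_induce [Finite V] (hvw : G.Adj v w)
    (hleaf : ∀ x, G.Adj v x → x = w) :
    (Set.toFinite G.edgeSet).toFinset = insert s(v, w)
      ((Set.toFinite (G.induce {v}ᶜ).edgeSet).toFinset.image (Sym2.map Subtype.val)) := by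
  ext e
  simp only [Set.Finite.mem_toFinset, Finset.mem_insert, Finset.mem_image]
  constructor
  · induction e using Sym2.ind with
    | _ x y =>
      intro hxy
      by_cases hx : x = v
      · subst hx
        exact Or.inl (by rw [hleaf y hxy])
      by_cases hy : y = v
      · subst hy
        exact Or.inl (by rw [hleaf x hxy.symm, Sym2.eq_swap])
      exact Or.inr ⟨s(⟨x, hx⟩, ⟨y, hy⟩), hxy, rfl⟩
  · rintro (rfl | ⟨e, he, rfl⟩)
    · exact hvw
    · induction e using Sym2.ind with
      | _ a b => exact he

lemma cutMonomial_eq_mul_rename_induce [Finite V] (hvw : G.Adj v w)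
    (hleaf : ∀ x, G.Adj v x → x = w) (A : Set V) :
    cutMonomial K G A =
      (if IsCutEdge A s(v, w) then X (true, s(v, w)) else X (false, s(v, w))) *
        rename (Prod.map id (Sym2.map Subtype.val))
          (cutMonomial K (G.induce {v}ᶜ) (Subtype.val ⁻¹' A)) := by
  have hvw_notMem : s(v, w) ∉ (Set.toFinite (G.induce {v}ᶜ).edgeSet).toFinset.image
      (Sym2.map Subtype.val) := by
    simp only [Finset.mem_image, not_exists, not_and]
    exact fun e _ he => notMem_map_val_compl_singleton e (he ▸ Sym2.mem_mk_left v w)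
  rw [cutMonomial, cutMonomial, edgeFinset_eq_insert_image_induce hvw hleaf,
    Finset.prod_insert hvw_notMem,
    Finset.prod_image fun _ _ _ _ h => Sym2.map.injective Subtype.val_injective h, map_prod]
  refine congrArg _ (Finset.prod_congr rfl fun e _ => ?_)
  rw [isCutEdge_map]
  split_ifs <;> rw [rename_X] <;> rfl

lemma phi_induce_comp_rename_comap_val [Finite V] (hvw : G.Adj v w)
    (hleaf : ∀ x, G.Adj v x → x = w) :
    (phi K (G.induce {v}ᶜ)).comp (rename (Partition.comap Subtype.val)) =
      (aeval fun p : Bool × Sym2 V =>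
        if v ∈ p.2 then 1 else X (p.1, p.2.map (leafRetraction hvw.ne'))).comp (phi K G) := by
  set ρ : MvPolynomial (Bool × Sym2 V) K →ₐ[K] MvPolynomial (Bool × Sym2 ({v}ᶜ : Set V)) K :=
    aeval fun p => if v ∈ p.2 then 1 else X (p.1, p.2.map (leafRetraction hvw.ne'))
  have hρ_rename : ∀ f, ρ (rename (Prod.map id (Sym2.map Subtype.val)) f) = f := by
    refine fun f => DFunLike.congr_fun (algHom_ext fun p => ?_ :
      ρ.comp (rename (Prod.map id (Sym2.map Subtype.val))) = AlgHom.id K _) f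
    simp only [AlgHom.comp_apply, rename_X, ρ, aeval_X, Prod.map_fst, Prod.map_snd, id_eq,
      if_neg (notMem_map_val_compl_singleton _), Sym2.map_map, leafRetraction_comp_val,
      Sym2.map_id', Prod.mk.eta, AlgHom.id_apply]
  have hρ_leaf : ∀ b, ρ (X (b, s(v, w))) = 1 := fun b => by
    rw [aeval_X, if_pos (Sym2.mem_mk_left v w)]
  refine algHom_ext fun p => ?_
  induction p using Quotient.ind with
  | _ A =>
    rw [AlgHom.comp_apply, AlgHom.comp_apply, rename_X, Partition.comap_mk, phi_X_mk, phi_X_mk,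
      cutMonomial_eq_mul_rename_induce K hvw hleaf, map_mul, hρ_rename, apply_ite ρ, hρ_leaf,
      hρ_leaf, ite_self, one_mul]

lemma phi_comp_rename_comap_leafRetraction [Finite V] (hvw : G.Adj v w)
    (hleaf : ∀ x, G.Adj v x → x = w) {e₀ : Sym2 ({v}ᶜ : Set V)}
    (he₀ : e₀ ∈ (G.induce {v}ᶜ).edgeSet) :
    (phi K G).comp (rename (Partition.comap (leafRetraction hvw.ne'))) =
      (aeval fun p : Bool × Sym2 ({v}ᶜ : Set V) =>
        X (p.1, p.2.map Subtype.val) * if p.2 = e₀ then X (false, s(v, w)) else 1).comp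
        (phi K (G.induce {v}ᶜ)) := by
  set r := leafRetraction hvw.ne'
  set t : MvPolynomial (Bool × Sym2 V) K := X (false, s(v, w))
  set τ : MvPolynomial (Bool × Sym2 ({v}ᶜ : Set V)) K →ₐ[K] MvPolynomial (Bool × Sym2 V) K :=
    aeval fun p => X (p.1, p.2.map Subtype.val) * if p.2 = e₀ then t else 1
  have hr : r v = r w := by simp only [r, leafRetraction, dif_pos, dif_neg hvw.ne']
  have hnot_cut : ∀ B, ¬ IsCutEdge (r ⁻¹' B) s(v, w) := fun B => by
    rw [← isCutEdge_map, Sym2.map_mk, hr]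
    exact not_isCutEdge_mk_self B (r w)
  have hval_r : ∀ B, Subtype.val ⁻¹' (r ⁻¹' B) = B := fun B => by
    rw [← Set.preimage_comp, leafRetraction_comp_val, Set.preimage_id]
  refine algHom_ext fun p => ?_
  induction p using Quotient.ind with
  | _ B =>
    rw [AlgHom.comp_apply, AlgHom.comp_apply, rename_X, Partition.comap_mk, phi_X_mk, phi_X_mk,
      cutMonomial_eq_mul_rename_induce K hvw hleaf, if_neg (hnot_cut B), hval_r, mul_comm,
      cutMonomial, map_prod, map_prod]
    have hτ : ∀ e : Sym2 ({v}ᶜ : Set V),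
        τ (if IsCutEdge B e then X (true, e) else X (false, e)) =
        rename (Prod.map id (Sym2.map Subtype.val))
          (if IsCutEdge B e then X (true, e) else X (false, e)) * if e = e₀ then t else 1 := by
      intro e
      rw [apply_ite τ, apply_ite (rename _), ite_mul]
      simp only [τ, aeval_X, rename_X]
      rfl
    rw [Finset.prod_congr rfl fun e _ => hτ e, Finset.prod_mul_distrib, Finset.prod_ite_eq',
      if_pos ((Set.toFinite _).mem_toFinset.mpr he₀)]

theorem cutAlgebraRetract_induce_compl_of_leaf [Finite V] (hvw : G.Adj v w)
    (hleaf : ∀ x, G.Adj v x → x = w) :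
    CutAlgebraRetract K (G.induce {v}ᶜ) G := by
  have hπI := cutIdeal_le_comap_of_comp_eq K _ _ (phi_induce_comp_rename_comap_val K hvw hleaf)
  have hπ_hom : ∀ p, (rename (Partition.comap Subtype.val) (X p) :
      MvPolynomial (Partition ({v}ᶜ : Set V)) K).IsHomogeneous 1 := fun p => by
    rw [rename_X]
    exact isHomogeneous_X K _
  rcases (G.induce {v}ᶜ).edgeSet.eq_empty_or_nonempty with hH | ⟨e₀, he₀⟩
  · refine cutAlgebraRetract_of_algHom K (aeval fun _ => 1) _ (m := 0) (fun _ => ?_) hπ_hom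
      (cutIdeal_le_comap_aeval_one K G hH) hπI fun p => ?_
    · rw [aeval_X]
      exact isHomogeneous_one _ K
    · rw [aeval_X, map_one]
      change phi K _ (1 - X p) = 0
      rw [map_sub, map_one, phi_X_of_edgeSet_eq_empty K hH, sub_self]
  · refine cutAlgebraRetract_of_algHom K (rename (Partition.comap (leafRetraction hvw.ne'))) _
      (m := 1) (fun _ => ?_) hπ_hom
      (cutIdeal_le_comap_of_comp_eq K _ _ (phi_comp_rename_comap_leafRetraction K hvw hleaf he₀))
      hπI fun p => ?_
    · rw [rename_X]
      exact isHomogeneous_X K _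
    · rw [rename_X, rename_X, Partition.comap_comap, leafRetraction_comp_val, Partition.comap_id,
        sub_self]
      exact zero_mem _

lemma isNeighborhoodMinor_compl_singleton_of_leaf (hvw : G.Adj v w)
    (hleaf : ∀ x, G.Adj v x → x = w) :
    IsNeighborhoodMinor G {v}ᶜ := by
  refine ⟨⟨w, hvw.ne'⟩, by simp, w, hvw.ne', fun x _ ⟨y, hy, hyx⟩ => Or.inl (hleaf x ?_)⟩
  rw [compl_compl, Set.mem_singleton_iff] at hy
  rwa [← hy]

end Leaf

theorem stmt17_general {V : Type} [Fintype V] (K : Type) [Field K]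
    (G : SimpleGraph V)
    (v : V) (hdeg : ∃! w : V, G.Adj v w) :
    IsNeighborhoodMinor G ({v}ᶜ : Set V) ∧
      CutAlgebraRetract K (SimpleGraph.induce ({v}ᶜ : Set V) G) G := by
  obtain ⟨w, hvw, hleaf⟩ := hdeg
  exact ⟨isNeighborhoodMinor_compl_singleton_of_leaf hvw hleaf,
    cutAlgebraRetract_induce_compl_of_leaf K hvw hleaf⟩

theorem stmt17 {V : Type} [Fintype V] (K : Type) [Field K]
    (G : SimpleGraph V) (hT : G.IsTree) (hcard : 2 ≤ Nat.card V)
    (v : V) (hdeg : ∃! w : V, G.Adj v w) :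
    IsNeighborhoodMinor G ({v}ᶜ : Set V) ∧
      CutAlgebraRetract K (SimpleGraph.induce ({v}ᶜ : Set V) G) G :=
  stmt17_general K G v hdeg

end CutPaper
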